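/- arXiv:2604.06260 — 8 statements merged into one kernel-verified Lean document; each statement's English description precedes it below -/
import Mathlib

section
/- Let τ > 0. For every probability mass function q on X with D(q‖p₀) ≤ D(p̃_τ‖p₀), one has E_q[f] ≤ E_{p̃_τ}[f]. In other words, the reward-tilted Gibbs distribution p̃_τ maximizes expected reward among all distributions lying within KL divergence D(p̃_τ‖p₀) of the base distribution p₀. -/
/-- Partition function `Z(τ) = ∑ x, p₀ x · exp (τ · f x)`. -/
noncomputable def partitionZ {X : Type*} [Fintype X] (p₀ f : X → ℝ) (τ : ℝ) : ℝ :=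
  ∑ x, p₀ x * Real.exp (τ * f x)

/-- Reward-tilted (Gibbs) distribution `p̃_τ(x) = p₀(x)·exp(τ·f(x)) / Z(τ)`. -/
noncomputable def tilted {X : Type*} [Fintype X] (p₀ f : X → ℝ) (τ : ℝ) (x : X) : ℝ :=
  p₀ x * Real.exp (τ * f x) / partitionZ p₀ f τ

/-- KL divergence `D(q‖p) = ∑ x, q x · log (q x / p x)` (with `0·log 0 = 0`,
which holds automatically since the factor `q x` vanishes). -/
noncomputable def klDivF {X : Type*} [Fintype X] (q p : X → ℝ) : ℝ :=
  ∑ x, q x * Real.log (q x / p x)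

/-- Expected reward `E_q[f] = ∑ x, q x · f x`. -/
noncomputable def expReward {X : Type*} [Fintype X] (q f : X → ℝ) : ℝ :=
  ∑ x, q x * f x

/-- For τ > 0, every pmf `q` with `D(q‖p₀) ≤ D(p̃_τ‖p₀)` satisfies
`E_q[f] ≤ E_{p̃_τ}[f]`: the Gibbs distribution maximizes expected reward on the KL ball. -/
theorem tilted_maximizes_expReward {X : Type*} [Fintype X] [Nonempty X]
    (p₀ f : X → ℝ) (hp : ∀ x, 0 < p₀ x) (hp1 : ∑ x, p₀ x = 1)
    (τ : ℝ) (hτ : 0 < τ)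
    (q : X → ℝ) (hq : ∀ x, 0 ≤ q x) (hq1 : ∑ x, q x = 1)
    (hKL : klDivF q p₀ ≤ klDivF (tilted p₀ f τ) p₀) :
    expReward q f ≤ expReward (tilted p₀ f τ) f := by
  set Z := partitionZ p₀ f τ with hZdef
  have hZ : 0 < Z := by
    apply Finset.sum_pos
    · intro x _
      exact mul_pos (hp x) (Real.exp_pos _)
    · exact Finset.univ_nonempty
  set pt := tilted p₀ f τ with hptdef
  have hpt : ∀ x, 0 < pt x := fun x =>
    div_pos (mul_pos (hp x) (Real.exp_pos _)) hZ
  have hpt1 : ∑ x, pt x = 1 := by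
    simp only [hptdef, tilted]
    rw [← Finset.sum_div, show (∑ x : X, p₀ x * Real.exp (τ * f x)) = Z from rfl,
      div_self (ne_of_gt hZ)]
  -- log of ratio pt/p₀
  have hlogratio : ∀ x, Real.log (pt x / p₀ x) = τ * f x - Real.log Z := by
    intro x
    have h1 : pt x / p₀ x = Real.exp (τ * f x) / Z := by
      rw [div_eq_div_iff (ne_of_gt (hp x)) (ne_of_gt hZ)]
      simp only [hptdef, tilted, ← hZdef]
      rw [div_mul_cancel₀ _ (ne_of_gt hZ)]
      ring
    rw [h1, Real.log_div (Real.exp_ne_zero _) (ne_of_gt hZ), Real.log_exp]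
  -- Key decomposition for any pmf r
  have key : ∀ r : X → ℝ, (∀ x, 0 ≤ r x) → (∑ x, r x = 1) →
      klDivF r p₀ = klDivF r pt + τ * expReward r f - Real.log Z := by
    intro r hr hr1
    have hterm : ∀ x, r x * Real.log (r x / p₀ x)
        = r x * Real.log (r x / pt x) + r x * (τ * f x) - r x * Real.log Z := by
      intro x
      rcases eq_or_lt_of_le (hr x) with h | h
      · simp [← h]
      · have hsplit : r x / p₀ x = (r x / pt x) * (pt x / p₀ x) := by
          rw [div_mul_div_comm, mul_comm (r x) (pt x),
            mul_div_mul_left _ _ (hpt x).ne']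
        rw [hsplit, Real.log_mul (div_pos h (hpt x)).ne' (div_pos (hpt x) (hp x)).ne',
          hlogratio x]
        ring
    have ht : ∑ x, r x * (τ * f x) = τ * expReward r f := by
      rw [expReward, Finset.mul_sum]
      exact Finset.sum_congr rfl fun x _ => by ring
    have h2 : ∑ x, r x * Real.log Z = Real.log Z := by
      rw [← Finset.sum_mul, hr1, one_mul]
    rw [klDivF, Finset.sum_congr rfl fun x _ => hterm x,
      Finset.sum_sub_distrib, Finset.sum_add_distrib, ht, h2, klDivF]
  have keyq := key q hq hq1
  have keypt := key pt (fun x => le_of_lt (hpt x)) hpt1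
  have hklptpt : klDivF pt pt = 0 := by
    simp only [klDivF]
    apply Finset.sum_eq_zero
    intro x _
    rw [div_self (ne_of_gt (hpt x)), Real.log_one, mul_zero]
  -- Gibbs inequality: 0 ≤ klDivF q pt
  have hgibbs : 0 ≤ klDivF q pt := by
    have hterm : ∀ x, q x - pt x ≤ q x * Real.log (q x / pt x) := by
      intro x
      rcases eq_or_lt_of_le (hq x) with h | h
      · simp [← h, le_of_lt (hpt x)]
      · have hlog : Real.log (pt x / q x) ≤ pt x / q x - 1 :=
          Real.log_le_sub_one_of_pos (div_pos (hpt x) h)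
        have heq : Real.log (q x / pt x) = - Real.log (pt x / q x) := by
          rw [← Real.log_inv]
          congr 1
          field_simp
        rw [heq]
        have := mul_le_mul_of_nonneg_left hlog (le_of_lt h)
        have h2 : q x * (pt x / q x - 1) = pt x - q x := by
          field_simp [h.ne']
        nlinarith
    calc (0:ℝ) = ∑ x, (q x - pt x) := by
          rw [Finset.sum_sub_distrib, hq1, hpt1]; ring
      _ ≤ ∑ x, q x * Real.log (q x / pt x) := Finset.sum_le_sum fun x _ => hterm x
      _ = klDivF q pt := rfl
  rw [hklptpt] at keypt
  have hfinal : τ * expReward q f ≤ τ * expReward pt f := by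
    have h1 : τ * expReward q f = klDivF q p₀ - klDivF q pt + Real.log Z := by
      linarith [keyq]
    have h2 : τ * expReward pt f = klDivF pt p₀ + Real.log Z := by
      linarith [keypt]
    linarith
  exact le_of_mul_le_mul_left hfinal hτ
end

section
/- Let τ > 0. If q is a probability mass function on X with D(q‖p₀) ≤ D(p̃_τ‖p₀) and E_q[f] = E_{p̃_τ}[f], then q = p̃_τ. Hence p̃_τ is the unique maximizer of expected reward over the KL ball {q : D(q‖p₀) ≤ D(p̃_τ‖p₀)}. -/
/-- For τ > 0, if a pmf `q` lies in the KL ball `D(q‖p₀) ≤ D(p̃_τ‖p₀)` and achieves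
the same expected reward as `p̃_τ`, then `q = p̃_τ`: the Gibbs distribution is the
unique maximizer of expected reward over the KL ball. -/
theorem tilted_unique_maximizer {X : Type*} [Fintype X] [Nonempty X]
    (p₀ f : X → ℝ) (hp : ∀ x, 0 < p₀ x) (hp1 : ∑ x, p₀ x = 1)
    (τ : ℝ) (hτ : 0 < τ)
    (q : X → ℝ) (hq : ∀ x, 0 ≤ q x) (hq1 : ∑ x, q x = 1)
    (hKL : klDivF q p₀ ≤ klDivF (tilted p₀ f τ) p₀)
    (hE : expReward q f = expReward (tilted p₀ f τ) f) :
    q = tilted p₀ f τ := by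
  set Z := partitionZ p₀ f τ with hZdef
  have hZ : 0 < Z := Finset.sum_pos (fun x _ => mul_pos (hp x) (Real.exp_pos _))
    Finset.univ_nonempty
  set pt := tilted p₀ f τ with hptdef
  have hpt : ∀ x, 0 < pt x := fun x =>
    div_pos (mul_pos (hp x) (Real.exp_pos _)) hZ
  have hpt1 : ∑ x, pt x = 1 := by
    simp only [hptdef, tilted, ← Finset.sum_div]
    exact div_self hZ.ne'
  -- chain rule identity
  have key : ∀ (r : X → ℝ), (∀ x, 0 ≤ r x) → (∑ x, r x) = 1 →
      klDivF r p₀ = klDivF r pt + τ * expReward r f - Real.log Z := by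
    intro r hr hr1
    have : ∀ x, r x * Real.log (r x / p₀ x)
        = r x * Real.log (r x / pt x) + (r x * f x) * τ - r x * Real.log Z := by
      intro x
      rcases eq_or_lt_of_le (hr x) with h | h
      · simp [← h]
      · have hlog : Real.log (r x / p₀ x)
            = Real.log (r x / pt x) + τ * f x - Real.log Z := by
          have hptZ : pt x * Z = p₀ x * Real.exp (τ * f x) := by
            simp only [hptdef, tilted, ← hZdef]
            field_simp
          have : r x / p₀ x = (r x / pt x) * (Real.exp (τ * f x) / Z) := by
            rw [div_mul_div_comm, hptZ, mul_div_mul_right _ _ (Real.exp_pos (τ * f x)).ne']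
          rw [this, Real.log_mul (div_pos h (hpt x)).ne'
              (div_pos (Real.exp_pos _) hZ).ne',
            Real.log_div (Real.exp_pos _).ne' hZ.ne', Real.log_exp]
          ring
        rw [hlog]; ring
    simp only [klDivF, expReward]
    rw [Finset.sum_congr rfl (fun x _ => this x)]
    rw [Finset.sum_sub_distrib, Finset.sum_add_distrib, ← Finset.sum_mul,
      ← Finset.sum_mul, hr1]
    ring
  have hself : klDivF pt pt = 0 :=
    Finset.sum_eq_zero fun x _ => by rw [div_self (hpt x).ne', Real.log_one, mul_zero]
  have hkq : klDivF q pt ≤ 0 := by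
    have h1 := key q hq hq1
    have h2 := key pt (fun x => (hpt x).le) hpt1
    rw [hself] at h2
    rw [h1, h2, hE] at hKL
    linarith
  -- Gibbs: pointwise nonnegativity of q log(q/pt) - (q - pt)
  have hpoint : ∀ x, 0 ≤ q x * Real.log (q x / pt x) - (q x - pt x) := by
    intro x
    rcases eq_or_lt_of_le (hq x) with h | h
    · simp [← h, (hpt x).le]
    · have := Real.log_le_sub_one_of_pos (div_pos (hpt x) h)
      have hlog : Real.log (q x / pt x) = - Real.log (pt x / q x) := by
        rw [← Real.log_inv, inv_div]
      have hqd : q x * (pt x / q x) = pt x := mul_div_cancel₀ _ h.ne'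
      nlinarith [mul_le_mul_of_nonneg_left this h.le]
  have hsum : ∑ x, (q x * Real.log (q x / pt x) - (q x - pt x)) = klDivF q pt := by
    rw [Finset.sum_sub_distrib, Finset.sum_sub_distrib, hq1, hpt1, klDivF]
    ring
  have hzero : ∀ x ∈ Finset.univ, q x * Real.log (q x / pt x) - (q x - pt x) = 0 := by
    rw [← Finset.sum_eq_zero_iff_of_nonneg (fun x _ => hpoint x)]
    have : (0:ℝ) ≤ ∑ x, (q x * Real.log (q x / pt x) - (q x - pt x)) :=
      Finset.sum_nonneg fun x _ => hpoint x
    rw [hsum] at this ⊢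
    linarith
  funext x
  have hx := hzero x (Finset.mem_univ x)
  rcases eq_or_lt_of_le (hq x) with h | h
  · exfalso; rw [← h] at hx; simp at hx; exact (hpt x).ne' hx
  · by_contra hne
    have hd : pt x / q x ≠ 1 := by
      intro h1
      exact hne ((div_eq_one_iff_eq h.ne').mp h1).symm
    have := Real.log_lt_sub_one_of_pos (div_pos (hpt x) h) hd
    have hlog : Real.log (q x / pt x) = - Real.log (pt x / q x) := by
      rw [← Real.log_inv, inv_div]
    have hqd : q x * (pt x / q x) = pt x := mul_div_cancel₀ _ h.ne'
    nlinarith [mul_lt_mul_of_pos_left this h]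
end

section
/- Donsker–Varadhan duality: for every τ ∈ ℝ, log Z(τ) = max over all probability mass functions q on X of (τ·E_q[f] − D(q‖p₀)), and the maximum is attained exactly when q = p̃_τ. -/
lemma gibbs_term {q t : ℝ} (hq : 0 ≤ q) (ht : 0 < t) :
    q - t ≤ q * Real.log (q / t) := by
  rcases eq_or_lt_of_le hq with h | h
  · simp [← h]; linarith
  · have h1 : Real.log (t / q) ≤ t / q - 1 := Real.log_le_sub_one_of_pos (by positivity)
    have h2 : Real.log (q / t) = -Real.log (t / q) := by
      rw [← Real.log_inv]; congr 1; field_simp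
    have h3 : q * (t / q) = t := by field_simp
    nlinarith [mul_le_mul_of_nonneg_left h1 h.le]

lemma gibbs_term_strict {q t : ℝ} (hq : 0 ≤ q) (ht : 0 < t) (hne : q ≠ t) :
    q - t < q * Real.log (q / t) := by
  rcases eq_or_lt_of_le hq with h | h
  · simp [← h]; linarith
  · have hr : t / q ≠ 1 := by
      intro hc; apply hne; field_simp at hc; linarith
    have h1 : Real.log (t / q) < t / q - 1 :=
      Real.log_lt_sub_one_of_pos (by positivity) hr
    have h2 : Real.log (q / t) = -Real.log (t / q) := by
      rw [← Real.log_inv]; congr 1; field_simp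
    have h3 : q * (t / q) = t := by field_simp
    nlinarith [mul_lt_mul_of_pos_left h1 h]

lemma gibbs {X : Type*} [Fintype X] (q t : X → ℝ) (hq : ∀ x, 0 ≤ q x)
    (ht : ∀ x, 0 < t x) (hq1 : ∑ x, q x = 1) (ht1 : ∑ x, t x = 1) :
    0 ≤ klDivF q t ∧ (klDivF q t = 0 ↔ q = t) := by
  have hle : ∀ x ∈ Finset.univ, q x - t x ≤ q x * Real.log (q x / t x) :=
    fun x _ => gibbs_term (hq x) (ht x)
  have hsum : ∑ x, (q x - t x) = 0 := by
    rw [Finset.sum_sub_distrib, hq1, ht1]; ring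
  have h0 : 0 ≤ klDivF q t := by
    rw [klDivF, ← hsum]
    exact Finset.sum_le_sum hle
  refine ⟨h0, ?_, ?_⟩
  · intro h
    by_contra hne
    obtain ⟨x, hx⟩ := Function.ne_iff.mp hne
    have : ∑ x, (q x - t x) < ∑ x, q x * Real.log (q x / t x) :=
      Finset.sum_lt_sum hle ⟨x, Finset.mem_univ x, gibbs_term_strict (hq x) (ht x) hx⟩
    rw [hsum] at this
    rw [klDivF] at h
    linarith
  · intro h
    subst h
    rw [klDivF]
    apply Finset.sum_eq_zero
    intro x _
    rw [div_self (ht x).ne', Real.log_one, mul_zero]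

/-- Donsker–Varadhan duality: `log Z(τ)` is the maximum of `τ·E_q[f] − D(q‖p₀)`
over all pmfs `q`, and the maximum is attained exactly when `q = p̃_τ`. -/
theorem donsker_varadhan_duality {X : Type*} [Fintype X] [Nonempty X]
    (p₀ f : X → ℝ) (hp : ∀ x, 0 < p₀ x) (hp1 : ∑ x, p₀ x = 1)
    (τ : ℝ) :
    (∀ q : X → ℝ, (∀ x, 0 ≤ q x) → ∑ x, q x = 1 →
        τ * expReward q f - klDivF q p₀ ≤ Real.log (partitionZ p₀ f τ)) ∧
    (∀ q : X → ℝ, (∀ x, 0 ≤ q x) → ∑ x, q x = 1 →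
        (τ * expReward q f - klDivF q p₀ = Real.log (partitionZ p₀ f τ) ↔
          q = tilted p₀ f τ)) := by
  set Z := partitionZ p₀ f τ with hZdef
  have hZ : 0 < Z := by
    rw [hZdef, partitionZ]
    exact Finset.sum_pos (fun x _ => mul_pos (hp x) (Real.exp_pos _)) Finset.univ_nonempty
  have htpos : ∀ x, 0 < tilted p₀ f τ x := fun x => by
    rw [tilted, ← hZdef]
    exact div_pos (mul_pos (hp x) (Real.exp_pos _)) hZ
  have ht1 : ∑ x, tilted p₀ f τ x = 1 := by
    simp only [tilted, ← hZdef]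
    rw [← Finset.sum_div]
    show Z / Z = 1
    exact div_self hZ.ne'
  -- key identity
  have key : ∀ q : X → ℝ, (∀ x, 0 ≤ q x) → ∑ x, q x = 1 →
      τ * expReward q f - klDivF q p₀ = Real.log Z - klDivF q (tilted p₀ f τ) := by
    intro q hq hq1
    have term : ∀ x, q x * Real.log (q x / tilted p₀ f τ x)
        = q x * Real.log (q x / p₀ x) - τ * (q x * f x) + q x * Real.log Z := by
      intro x
      rcases eq_or_lt_of_le (hq x) with h | h
      · simp [← h]
      · have hpx := hp x
        have he : (0:ℝ) < Real.exp (τ * f x) := Real.exp_pos _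
        rw [tilted, ← hZdef]
        rw [div_div_eq_mul_div, Real.log_div (by positivity) (by positivity),
          Real.log_mul h.ne' hZ.ne', Real.log_mul hpx.ne' he.ne',
          Real.log_exp, Real.log_div h.ne' hpx.ne']
        ring
    have : klDivF q (tilted p₀ f τ)
        = klDivF q p₀ - τ * expReward q f + Real.log Z := by
      simp only [klDivF, expReward]
      rw [Finset.sum_congr rfl (fun x _ => term x)]
      rw [Finset.sum_add_distrib, Finset.sum_sub_distrib, ← Finset.sum_mul, hq1,
        Finset.mul_sum]
      ring
    linarith [this]
  constructor
  · intro q hq hq1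
    have := (gibbs q (tilted p₀ f τ) hq htpos hq1 ht1).1
    rw [key q hq hq1]
    linarith
  · intro q hq hq1
    have hg := (gibbs q (tilted p₀ f τ) hq htpos hq1 ht1).2
    rw [key q hq hq1]
    constructor
    · intro h
      exact hg.mp (by linarith)
    · intro h
      rw [hg.mpr h]
      ring
end

section
/- The map τ ↦ E_{p̃_τ}[f] is differentiable on ℝ, and its derivative at every τ equals the variance of f under p̃_τ, namely Var_{p̃_τ}(f) = E_{p̃_τ}[f²] − (E_{p̃_τ}[f])², which is nonnegative. -/
/-- The map `τ ↦ E_{p̃_τ}[f]` is differentiable on `ℝ`, with derivative at each `τ`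
equal to the variance `Var_{p̃_τ}(f) = E_{p̃_τ}[f²] − (E_{p̃_τ}[f])²`, which is nonnegative. -/
theorem tilted_expReward_hasDerivAt_variance {X : Type*} [Fintype X] [Nonempty X]
    (p₀ f : X → ℝ) (hp : ∀ x, 0 < p₀ x) (hp1 : ∑ x, p₀ x = 1) :
    Differentiable ℝ (fun τ : ℝ => expReward (tilted p₀ f τ) f) ∧
    ∀ τ : ℝ,
      HasDerivAt (fun t : ℝ => expReward (tilted p₀ f t) f)
        (expReward (tilted p₀ f τ) (fun x => f x ^ 2) -
          (expReward (tilted p₀ f τ) f) ^ 2) τ ∧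
      0 ≤ expReward (tilted p₀ f τ) (fun x => f x ^ 2) -
          (expReward (tilted p₀ f τ) f) ^ 2 := by
  have hZpos : ∀ τ, 0 < partitionZ p₀ f τ := fun τ =>
    Finset.sum_pos (fun x _ => mul_pos (hp x) (Real.exp_pos _)) Finset.univ_nonempty
  set N : ℝ → ℝ := fun τ => ∑ x, p₀ x * f x * Real.exp (τ * f x) with hN
  set M : ℝ → ℝ := fun τ => ∑ x, p₀ x * f x ^ 2 * Real.exp (τ * f x) with hM
  have hE : ∀ τ, expReward (tilted p₀ f τ) f = N τ / partitionZ p₀ f τ := by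
    intro τ
    simp only [expReward, tilted, hN]
    rw [Finset.sum_div]
    exact Finset.sum_congr rfl fun x _ => by ring
  have hE2 : ∀ τ, expReward (tilted p₀ f τ) (fun x => f x ^ 2)
      = M τ / partitionZ p₀ f τ := by
    intro τ
    simp only [expReward, tilted, hM]
    rw [Finset.sum_div]
    exact Finset.sum_congr rfl fun x _ => by ring
  have hZder : ∀ τ, HasDerivAt (partitionZ p₀ f) (N τ) τ := by
    intro τ
    have : HasDerivAt (fun t => ∑ x, p₀ x * Real.exp (t * f x)) (N τ) τ := by
      rw [hN]
      refine HasDerivAt.fun_sum fun x _ => ?_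
      have h1 : HasDerivAt (fun t : ℝ => t * f x) (f x) τ := by
        simpa using (hasDerivAt_id τ).mul_const (f x)
      have := (h1.exp).const_mul (p₀ x)
      refine this.congr_deriv ?_
      ring
    exact this
  have hNder : ∀ τ, HasDerivAt N (M τ) τ := by
    intro τ
    rw [hN, hM]
    refine HasDerivAt.fun_sum fun x _ => ?_
    have h1 : HasDerivAt (fun t : ℝ => t * f x) (f x) τ := by
      simpa using (hasDerivAt_id τ).mul_const (f x)
    have := (h1.exp).const_mul (p₀ x * f x)
    refine this.congr_deriv ?_
    ring
  have hmain : ∀ τ, HasDerivAt (fun t : ℝ => expReward (tilted p₀ f t) f)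
      (expReward (tilted p₀ f τ) (fun x => f x ^ 2) -
        (expReward (tilted p₀ f τ) f) ^ 2) τ := by
    intro τ
    have h := (hNder τ).div (hZder τ) (hZpos τ).ne'
    have heq : (fun t : ℝ => expReward (tilted p₀ f t) f)
        = fun t => N t / partitionZ p₀ f t := funext hE
    rw [heq, hE, hE2]
    refine h.congr_deriv ?_
    have hZ := (hZpos τ).ne'
    rw [div_pow, div_sub_div _ _ hZ (pow_ne_zero 2 hZ),
      div_eq_div_iff (pow_ne_zero 2 hZ) (mul_ne_zero hZ (pow_ne_zero 2 hZ))]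
    ring
  have hvar : ∀ τ, 0 ≤ expReward (tilted p₀ f τ) (fun x => f x ^ 2) -
      (expReward (tilted p₀ f τ) f) ^ 2 := by
    intro τ
    rw [hE, hE2]
    have hcs : (N τ) ^ 2 ≤ M τ * partitionZ p₀ f τ := by
      have := Finset.sum_mul_sq_le_sq_mul_sq Finset.univ
        (fun x => Real.sqrt (p₀ x * Real.exp (τ * f x)) * f x)
        (fun x => Real.sqrt (p₀ x * Real.exp (τ * f x)))
      have hsq : ∀ x : X, Real.sqrt (p₀ x * Real.exp (τ * f x)) ^ 2
          = p₀ x * Real.exp (τ * f x) := fun x =>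
        Real.sq_sqrt (le_of_lt (mul_pos (hp x) (Real.exp_pos _)))
      calc (N τ) ^ 2
          = (∑ x, (Real.sqrt (p₀ x * Real.exp (τ * f x)) * f x) *
              Real.sqrt (p₀ x * Real.exp (τ * f x))) ^ 2 := by
            congr 1
            refine Finset.sum_congr rfl fun x _ => ?_
            linear_combination (-f x) * hsq x
        _ ≤ (∑ x, (Real.sqrt (p₀ x * Real.exp (τ * f x)) * f x) ^ 2) *
              ∑ x, Real.sqrt (p₀ x * Real.exp (τ * f x)) ^ 2 := this
        _ = M τ * partitionZ p₀ f τ := by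
            congr 1
            · refine Finset.sum_congr rfl fun x _ => ?_
              rw [mul_pow, hsq x]; ring
            · exact Finset.sum_congr rfl fun x _ => hsq x
    have hZ := hZpos τ
    rw [sub_nonneg, div_pow, div_le_div_iff₀ (by positivity) hZ]
    nlinarith [hcs, hZ]
  exact ⟨fun τ => (hmain τ).differentiableAt, fun τ => ⟨hmain τ, hvar τ⟩⟩
end

section
/- The KL divergence of the reward-tilted distribution from the base distribution is monotone in the temperature on the nonnegative axis: for all 0 ≤ τ₁ ≤ τ₂, D(p̃_{τ₁}‖p₀) ≤ D(p̃_{τ₂}‖p₀). -/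
section Aux

variable {X : Type*} [Fintype X] [Nonempty X]

lemma Zpos (p₀ f : X → ℝ) (hp : ∀ x, 0 < p₀ x) (τ : ℝ) : 0 < partitionZ p₀ f τ :=
  Finset.sum_pos (fun x _ => mul_pos (hp x) (Real.exp_pos _)) Finset.univ_nonempty

lemma tilted_pos (p₀ f : X → ℝ) (hp : ∀ x, 0 < p₀ x) (τ : ℝ) (x : X) :
    0 < tilted p₀ f τ x :=
  div_pos (mul_pos (hp x) (Real.exp_pos _)) (Zpos p₀ f hp τ)

lemma tilted_sum (p₀ f : X → ℝ) (hp : ∀ x, 0 < p₀ x) (τ : ℝ) :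
    ∑ x, tilted p₀ f τ x = 1 := by
  unfold tilted
  rw [← Finset.sum_div]
  exact div_self (Zpos p₀ f hp τ).ne'

lemma log_tilted (p₀ f : X → ℝ) (hp : ∀ x, 0 < p₀ x) (τ : ℝ) (x : X) :
    Real.log (tilted p₀ f τ x) =
      Real.log (p₀ x) + τ * f x - Real.log (partitionZ p₀ f τ) := by
  unfold tilted
  rw [Real.log_div (mul_pos (hp x) (Real.exp_pos _)).ne' (Zpos p₀ f hp τ).ne',
    Real.log_mul (hp x).ne' (Real.exp_pos _).ne', Real.log_exp]

lemma kl_nonneg (q p : X → ℝ) (hq : ∀ x, 0 < q x) (hp : ∀ x, 0 < p x)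
    (hq1 : ∑ x, q x = 1) (hp1 : ∑ x, p x = 1) : 0 ≤ klDivF q p := by
  have h : ∑ x, q x * Real.log (p x / q x) ≤ 0 := by
    calc ∑ x, q x * Real.log (p x / q x)
        ≤ ∑ x, q x * (p x / q x - 1) := by
          apply Finset.sum_le_sum
          intro x _
          exact mul_le_mul_of_nonneg_left
            (Real.log_le_sub_one_of_pos (div_pos (hp x) (hq x))) (hq x).le
      _ = ∑ x, (p x - q x) := by
          apply Finset.sum_congr rfl
          intro x _
          rw [mul_sub, mul_div_cancel₀ _ (hq x).ne', mul_one]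
      _ = 0 := by rw [Finset.sum_sub_distrib, hq1, hp1]; ring
  have heq : klDivF q p = -∑ x, q x * Real.log (p x / q x) := by
    unfold klDivF
    rw [← Finset.sum_neg_distrib]
    apply Finset.sum_congr rfl
    intro x _
    rw [Real.log_div (hq x).ne' (hp x).ne', Real.log_div (hp x).ne' (hq x).ne']
    ring
  rw [heq]
  linarith

lemma kl_tilted_base (p₀ f : X → ℝ) (hp : ∀ x, 0 < p₀ x) (τ : ℝ) :
    klDivF (tilted p₀ f τ) p₀ =
      τ * expReward (tilted p₀ f τ) f - Real.log (partitionZ p₀ f τ) := by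
  unfold klDivF expReward
  have : ∀ x : X, tilted p₀ f τ x * Real.log (tilted p₀ f τ x / p₀ x)
      = τ * (tilted p₀ f τ x * f x)
        - tilted p₀ f τ x * Real.log (partitionZ p₀ f τ) := by
    intro x
    rw [Real.log_div (tilted_pos p₀ f hp τ x).ne' (hp x).ne',
      log_tilted p₀ f hp τ x]
    ring
  rw [Finset.sum_congr rfl (fun x _ => this x), Finset.sum_sub_distrib,
    ← Finset.mul_sum, ← Finset.sum_mul, tilted_sum p₀ f hp, one_mul]

lemma kl_tilted_tilted (p₀ f : X → ℝ) (hp : ∀ x, 0 < p₀ x) (a b : ℝ) :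
    klDivF (tilted p₀ f a) (tilted p₀ f b) =
      (a - b) * expReward (tilted p₀ f a) f
        + Real.log (partitionZ p₀ f b) - Real.log (partitionZ p₀ f a) := by
  unfold klDivF expReward
  have : ∀ x : X, tilted p₀ f a x * Real.log (tilted p₀ f a x / tilted p₀ f b x)
      = (a - b) * (tilted p₀ f a x * f x)
        + tilted p₀ f a x *
          (Real.log (partitionZ p₀ f b) - Real.log (partitionZ p₀ f a)) := by
    intro x
    rw [Real.log_div (tilted_pos p₀ f hp a x).ne' (tilted_pos p₀ f hp b x).ne',
      log_tilted p₀ f hp a x, log_tilted p₀ f hp b x]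
    ring
  rw [Finset.sum_congr rfl (fun x _ => this x), Finset.sum_add_distrib,
    ← Finset.mul_sum, ← Finset.sum_mul, tilted_sum p₀ f hp, one_mul]
  ring

end Aux

/-- `D(p̃_τ‖p₀)` is monotone in the temperature on the nonnegative axis:
for `0 ≤ τ₁ ≤ τ₂`, `D(p̃_{τ₁}‖p₀) ≤ D(p̃_{τ₂}‖p₀)`. -/
theorem klDiv_tilted_monotone {X : Type*} [Fintype X] [Nonempty X]
    (p₀ f : X → ℝ) (hp : ∀ x, 0 < p₀ x) (hp1 : ∑ x, p₀ x = 1)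
    (τ₁ τ₂ : ℝ) (h0 : 0 ≤ τ₁) (hττ : τ₁ ≤ τ₂) :
    klDivF (tilted p₀ f τ₁) p₀ ≤ klDivF (tilted p₀ f τ₂) p₀ := by
  rcases eq_or_lt_of_le hττ with rfl | hlt
  · exact le_refl _
  set g₁ := expReward (tilted p₀ f τ₁) f
  set g₂ := expReward (tilted p₀ f τ₂) f
  set L₁ := Real.log (partitionZ p₀ f τ₁)
  set L₂ := Real.log (partitionZ p₀ f τ₂)
  have hK12 : 0 ≤ klDivF (tilted p₀ f τ₁) (tilted p₀ f τ₂) :=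
    kl_nonneg _ _ (tilted_pos p₀ f hp τ₁) (tilted_pos p₀ f hp τ₂)
      (tilted_sum p₀ f hp τ₁) (tilted_sum p₀ f hp τ₂)
  have hK21 : 0 ≤ klDivF (tilted p₀ f τ₂) (tilted p₀ f τ₁) :=
    kl_nonneg _ _ (tilted_pos p₀ f hp τ₂) (tilted_pos p₀ f hp τ₁)
      (tilted_sum p₀ f hp τ₂) (tilted_sum p₀ f hp τ₁)
  rw [kl_tilted_tilted p₀ f hp τ₁ τ₂] at hK12
  rw [kl_tilted_tilted p₀ f hp τ₂ τ₁] at hK21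
  rw [kl_tilted_base p₀ f hp τ₁, kl_tilted_base p₀ f hp τ₂]
  have hg : g₁ ≤ g₂ := by nlinarith
  nlinarith [mul_nonneg h0 (sub_nonneg.2 hg)]
end

section
/- Let Z = ∑_x μ_T(x)·h_T(x), and define the twisted initial distribution μ̃_T(x) = μ_T(x)·h_T(x)/Z and twisted kernels K̃_t(s)(y) = K_t(s)(y)·h_{t−1}(y)/h_t(s). Then Z > 0, μ̃_T is a probability mass function, and for every trajectory (x_T, …, x_0) ∈ S^{T+1}, μ̃_T(x_T)·∏_{t=1}^{T} K̃_t(x_t)(x_{t−1}) = p(x_{T:0})·exp(τ·f(x_0))/Z. That is, the Markov chain with twisted initial distribution and Doob h-transformed kernels has path distribution exactly equal to the reward-tilted path measure p̃(x_{T:0}) ∝ p(x_{T:0})·exp(τ·f(x_0)). -/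
open Fin.NatCast

/-- Backward information functions: `h 0 s = exp (τ·f s)` and
`h t s = ∑ y, K t s y * h (t-1) y` for `t ≥ 1`. -/
noncomputable def hback {S : Type*} [Fintype S] (K : ℕ → S → S → ℝ) (f : S → ℝ) (τ : ℝ) :
    ℕ → S → ℝ
  | 0, s => Real.exp (τ * f s)
  | t + 1, s => ∑ y, K (t + 1) s y * hback K f τ t y

/-- Base path measure: the probability of the trajectory `x = (x_T, …, x_0)`
(indexed so that `x i` is the state at time `i`, with initial time `T` and terminal
time `0`) is `μ_T(x_T) · ∏_{t=1}^{T} K_t(x_t)(x_{t−1})`. -/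
noncomputable def pathP {S : Type*} [Fintype S] (T : ℕ) (μT : S → ℝ) (K : ℕ → S → S → ℝ)
    (x : Fin (T + 1) → S) : ℝ :=
  μT (x (Fin.last T)) *
    ∏ t ∈ Finset.range T, K (t + 1) (x ((t + 1 : ℕ) : Fin (T + 1))) (x ((t : ℕ) : Fin (T + 1)))

private lemma telescope_aux (a g : ℕ → ℝ) (n : ℕ) (hg : ∀ t, t ≤ n → g t ≠ 0) :
    ∏ t ∈ Finset.range n, (a t * g t / g (t + 1)) =
      (∏ t ∈ Finset.range n, a t) * g 0 / g n := by
  induction n with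
  | zero => simp [div_self (hg 0 le_rfl)]
  | succ n ih =>
    rw [Finset.prod_range_succ, Finset.prod_range_succ,
      ih (fun t ht => hg t (ht.trans (Nat.le_succ n)))]
    have h1 : g n ≠ 0 := hg n (Nat.le_succ n)
    have h2 : g (n + 1) ≠ 0 := hg (n + 1) le_rfl
    field_simp

/-- With `Z = ∑ x, μ_T(x)·h_T(x)`, the twisted initial distribution
`μ̃_T(x) = μ_T(x)·h_T(x)/Z` and the twisted kernels
`K̃_t(s)(y) = K_t(s)(y)·h_{t−1}(y)/h_t(s)` satisfy: `Z > 0`, `μ̃_T` is a pmf, and the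
Markov chain they define has path distribution exactly the reward-tilted path measure
`p̃(x_{T:0}) = p(x_{T:0})·exp(τ·f(x_0))/Z`. -/
theorem twisted_chain_is_tilted_path_measure {S : Type*} [Fintype S] [Nonempty S]
    (T : ℕ) (hT : 1 ≤ T) (K : ℕ → S → S → ℝ)
    (hK : ∀ t, 1 ≤ t → t ≤ T → ∀ s : S, (∀ y, 0 ≤ K t s y) ∧ ∑ y, K t s y = 1)
    (μT : S → ℝ) (hμ0 : ∀ x, 0 ≤ μT x) (hμ1 : ∑ x, μT x = 1)
    (f : S → ℝ) (τ : ℝ) (hτ : 0 < τ)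
    (Z : ℝ) (hZ : Z = ∑ x, μT x * hback K f τ T x) :
    0 < Z ∧
    ((∀ x, 0 ≤ μT x * hback K f τ T x / Z) ∧ ∑ x, μT x * hback K f τ T x / Z = 1) ∧
    (∀ x : Fin (T + 1) → S,
      (μT (x (Fin.last T)) * hback K f τ T (x (Fin.last T)) / Z) *
        ∏ t ∈ Finset.range T,
          (K (t + 1) (x ((t + 1 : ℕ) : Fin (T + 1))) (x ((t : ℕ) : Fin (T + 1))) *
            hback K f τ t (x ((t : ℕ) : Fin (T + 1))) /
              hback K f τ (t + 1) (x ((t + 1 : ℕ) : Fin (T + 1)))) =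
        pathP T μT K x * Real.exp (τ * f (x ((0 : ℕ) : Fin (T + 1)))) / Z) := by

  have hpos : ∀ t, t ≤ T → ∀ s : S, 0 < hback K f τ t s := by
    intro t
    induction t with
    | zero => intro _ s; exact Real.exp_pos _
    | succ t ih =>
      intro htT s
      have hKt := hK (t + 1) (Nat.succ_le_succ (Nat.zero_le t)) htT s
      obtain ⟨y0, hy0⟩ : ∃ y, 0 < K (t + 1) s y := by
        by_contra h
        push_neg at h
        have : ∑ y, K (t + 1) s y ≤ 0 := Finset.sum_nonpos (fun y _ => h y)
        linarith [hKt.2]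
      show 0 < ∑ y, K (t + 1) s y * hback K f τ t y
      refine Finset.sum_pos' (fun y _ => mul_nonneg (hKt.1 y)
        (ih (le_of_lt htT) y).le) ⟨y0, Finset.mem_univ _, ?_⟩
      exact mul_pos hy0 (ih (le_of_lt htT) y0)
  have hZpos : 0 < Z := by
    obtain ⟨x0, hx0⟩ : ∃ x, 0 < μT x := by
      by_contra h
      push_neg at h
      have : ∑ x, μT x ≤ 0 := Finset.sum_nonpos (fun y _ => h y)
      linarith
    rw [hZ]
    refine Finset.sum_pos' (fun y _ => mul_nonneg (hμ0 y) (hpos T le_rfl y).le)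
      ⟨x0, Finset.mem_univ _, mul_pos hx0 (hpos T le_rfl x0)⟩
  refine ⟨hZpos, ⟨fun x => div_nonneg (mul_nonneg (hμ0 x) (hpos T le_rfl x).le) hZpos.le, ?_⟩, ?_⟩
  · rw [← Finset.sum_div, ← hZ, div_self hZpos.ne']
  · intro x
    set g : ℕ → ℝ := fun t => hback K f τ t (x ((t : ℕ) : Fin (T + 1))) with hg
    set a : ℕ → ℝ := fun t =>
      K (t + 1) (x ((t + 1 : ℕ) : Fin (T + 1))) (x ((t : ℕ) : Fin (T + 1))) with ha
    have hlast : ((T : ℕ) : Fin (T + 1)) = Fin.last T := by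
      simp [Fin.ext_iff, Nat.mod_eq_of_lt]
    have hgT : g T = hback K f τ T (x (Fin.last T)) := by rw [hg]; simp [hlast]
    have htel := telescope_aux a g T (fun t ht => (hpos t ht _).ne')
    calc (μT (x (Fin.last T)) * hback K f τ T (x (Fin.last T)) / Z) *
        ∏ t ∈ Finset.range T, (a t * g t / g (t + 1))
        = (μT (x (Fin.last T)) * hback K f τ T (x (Fin.last T)) / Z) *
          ((∏ t ∈ Finset.range T, a t) * g 0 / g T) := by rw [htel]
      _ = pathP T μT K x * Real.exp (τ * f (x ((0 : ℕ) : Fin (T + 1)))) / Z := by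
          have hg0 : g 0 = Real.exp (τ * f (x ((0 : ℕ) : Fin (T + 1)))) := rfl
          have hne : hback K f τ T (x (Fin.last T)) ≠ 0 := (hpos T le_rfl _).ne'
          have hprod : ∏ t ∈ Finset.range T, a t =
              ∏ t ∈ Finset.range T,
                K (t + 1) (x ((t : Fin (T + 1)) + 1)) (x (t : Fin (T + 1))) :=
            Finset.prod_congr rfl (fun t _ => by simp [ha, Nat.cast_add_one])
          rw [hg0, hgT, pathP]
          field_simp
          rw [hprod]
end

section
/- Let Z = ∑_x μ_T(x)·h_T(x). For every t ∈ {0, …, T}, let p_t(s) denote the time-t marginal of the base path measure (the sum of p(x_{T:0}) over all trajectories with x_t = s, marginalizing the remaining coordinates) and let p̃_t(s) denote the time-t marginal of the reward-tilted path measure p̃(x_{T:0}) = p(x_{T:0})·exp(τ·f(x_0))/Z. Then for every s ∈ S, p̃_t(s) = p_t(s)·h_t(s)/Z. -/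
open Fin.NatCast

/-- General backward recursion with base function `g`. -/
noncomputable def Hgen {S : Type*} [Fintype S] (K : ℕ → S → S → ℝ) (g : S → ℝ) :
    ℕ → S → ℝ
  | 0, s => g s
  | t + 1, s => ∑ y, K (t + 1) s y * Hgen K g t y

lemma hback_eq_Hgen {S : Type*} [Fintype S] (K : ℕ → S → S → ℝ) (f : S → ℝ) (τ : ℝ) :
    ∀ t s, hback K f τ t s = Hgen K (fun z => Real.exp (τ * f z)) t s := by
  intro t
  induction t with
  | zero => intro s; rfl
  | succ t ih => intro s; simp only [hback, Hgen, ih]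

lemma Hgen_one {S : Type*} [Fintype S] (T : ℕ) (K : ℕ → S → S → ℝ)
    (hK : ∀ t, 1 ≤ t → t ≤ T → ∀ s : S, (∀ y, 0 ≤ K t s y) ∧ ∑ y, K t s y = 1) :
    ∀ t, t ≤ T → ∀ s, Hgen K (fun _ => (1 : ℝ)) t s = 1 := by
  intro t
  induction t with
  | zero => intro _ s; rfl
  | succ t ih =>
    intro h s
    have : ∀ y : S, Hgen K (fun _ => (1:ℝ)) t y = 1 := ih (by omega)
    simp only [Hgen, this, mul_one]
    exact (hK (t+1) (by omega) h s).2

/-- Summing out one coordinate via an involution on `(Fin n → S) × S`. -/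
lemma sum_mul_update {S : Type*} [Fintype S] {n : ℕ} (i : Fin n)
    (A : (Fin n → S) → ℝ) (B : (Fin n → S) → S → ℝ)
    (hA : ∀ x y, A (Function.update x i y) = A x)
    (hB : ∀ x y z, B (Function.update x i y) z = B x z) :
    (Fintype.card S : ℝ) * ∑ x : Fin n → S, A x * B x (x i)
      = ∑ x : Fin n → S, A x * ∑ y, B x y := by
  have hinv : Function.Involutive
      (fun p : (Fin n → S) × S => (Function.update p.1 i p.2, p.1 i)) := by
    intro p
    simp [Function.update_idem, Function.update_eq_self]
  have key : ∑ p : (Fin n → S) × S, A p.1 * B p.1 (p.1 i)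
      = ∑ p : (Fin n → S) × S, A p.1 * B p.1 p.2 := by
    rw [← Equiv.sum_comp hinv.toPerm (fun p : (Fin n → S) × S => A p.1 * B p.1 p.2)]
    refine Finset.sum_congr rfl ?_
    intro p _
    simp only [Function.Involutive.coe_toPerm]
    rw [hA, hB]
  calc (Fintype.card S : ℝ) * ∑ x : Fin n → S, A x * B x (x i)
      = ∑ p : (Fin n → S) × S, A p.1 * B p.1 (p.1 i) := by
        rw [Fintype.sum_prod_type_right]
        simp [Finset.sum_const, mul_comm, Finset.mul_sum]
    _ = ∑ p : (Fin n → S) × S, A p.1 * B p.1 p.2 := key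
    _ = ∑ x : Fin n → S, A x * ∑ y, B x y := by
        rw [Fintype.sum_prod_type]
        simp [Finset.mul_sum]

/-- Upper part of the path measure: kernels with index `> t` only. -/
noncomputable def pUpper {S : Type*} [Fintype S] (T : ℕ) (μT : S → ℝ) (K : ℕ → S → S → ℝ)
    (t : ℕ) (x : Fin (T + 1) → S) : ℝ :=
  μT (x (Fin.last T)) *
    ∏ u ∈ Finset.Ico t T, K (u + 1) (x ((u + 1 : ℕ) : Fin (T + 1))) (x ((u : ℕ) : Fin (T + 1)))

lemma fin_cast_ne {T a b : ℕ} (ha : a < T + 1) (hb : b < T + 1) (h : a ≠ b) :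
    ((a : Fin (T + 1)) ≠ (b : Fin (T + 1))) := by
  simp only [ne_eq, Fin.ext_iff, Fin.val_cast_of_lt ha, Fin.val_cast_of_lt hb]
  exact h

/-- Main induction: integrating out the lower coordinates produces `Hgen`. -/
lemma lower_sum {S : Type*} [Fintype S] [Nonempty S] (T : ℕ) (μT : S → ℝ)
    (K : ℕ → S → S → ℝ) (g : S → ℝ) :
    ∀ t, t ≤ T → ∀ Φ : (Fin (T + 1) → S) → ℝ,
      (∀ x y : Fin (T + 1) → S, (∀ i : Fin (T + 1), t ≤ i.val → x i = y i) → Φ x = Φ y) →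
      ∑ x : Fin (T + 1) → S, pUpper T μT K t x * Hgen K g t (x ((t : ℕ) : Fin (T + 1))) * Φ x
        = (Fintype.card S : ℝ) ^ t *
          ∑ x : Fin (T + 1) → S, pathP T μT K x * g (x ((0 : ℕ) : Fin (T + 1))) * Φ x := by
  intro t
  induction t with
  | zero =>
    intro _ Φ _
    simp only [pUpper, pathP, Hgen, ← Finset.range_eq_Ico, pow_zero, one_mul, Nat.cast_zero]
  | succ t ih =>
    intro hle Φ hΦ
    have htT : t < T := by omega
    have htT1 : t < T + 1 := by omega
    have ht1T1 : t + 1 < T + 1 := by omega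
    set i : Fin (T + 1) := ((t : ℕ) : Fin (T + 1)) with hi
    have hival : i.val = t := Fin.val_cast_of_lt htT1
    -- updates at coordinate i don't change the things that matter
    have hupd : ∀ (x : Fin (T+1) → S) (y : S) (j : Fin (T+1)), j ≠ i →
        Function.update x i y j = x j := by
      intro x y j hj; exact Function.update_of_ne hj _ _
    have hΦupd : ∀ (x : Fin (T+1) → S) (y : S), Φ (Function.update x i y) = Φ x := by
      intro x y
      refine hΦ _ _ ?_
      intro j hj
      refine hupd x y j ?_
      intro hji; rw [hji, hival] at hj; omega
    have hPupd : ∀ (x : Fin (T+1) → S) (y : S),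
        pUpper T μT K (t+1) (Function.update x i y) = pUpper T μT K (t+1) x := by
      intro x y
      unfold pUpper
      congr 1
      · rw [hupd]
        intro hc
        have := congrArg Fin.val hc
        simp [Fin.val_last, hival] at this
        omega
      · refine Finset.prod_congr rfl ?_
        intro u hu
        rw [Finset.mem_Ico] at hu
        rw [hupd, hupd]
        · exact fin_cast_ne (by omega) htT1 (by omega)
        · exact fin_cast_ne (by omega) htT1 (by omega)
    -- split the bottom kernel off the pUpper product
    have hsplit : ∀ x : Fin (T+1) → S,
        pUpper T μT K t x
          = pUpper T μT K (t+1) x *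
            K (t + 1) (x ((t + 1 : ℕ) : Fin (T + 1))) (x i) := by
      intro x
      unfold pUpper
      rw [Finset.prod_eq_prod_Ico_succ_bot htT]
      ring
    -- the sum-out identity
    have hcard := sum_mul_update i
      (fun x => pUpper T μT K (t+1) x * Φ x)
      (fun x y => K (t + 1) (x ((t + 1 : ℕ) : Fin (T + 1))) y * Hgen K g t y)
      (by intro x y; rw [hPupd, hΦupd])
      (by
        intro x y z
        rw [hupd]
        exact fin_cast_ne ht1T1 htT1 (by omega))
    have hHrec : ∀ x : Fin (T+1) → S,
        ∑ y, K (t + 1) (x ((t + 1 : ℕ) : Fin (T + 1))) y * Hgen K g t y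
          = Hgen K g (t+1) (x ((t + 1 : ℕ) : Fin (T + 1))) := by
      intro x; rfl
    have step : ∑ x : Fin (T + 1) → S,
        pUpper T μT K (t+1) x * Hgen K g (t+1) (x ((t + 1 : ℕ) : Fin (T + 1))) * Φ x
        = (Fintype.card S : ℝ) *
          ∑ x : Fin (T + 1) → S, pUpper T μT K t x * Hgen K g t (x i) * Φ x := by
      have e1 : ∑ x : Fin (T + 1) → S, pUpper T μT K t x * Hgen K g t (x i) * Φ x
          = ∑ x : Fin (T + 1) → S, (pUpper T μT K (t+1) x * Φ x) *
              (K (t + 1) (x ((t + 1 : ℕ) : Fin (T + 1))) (x i) * Hgen K g t (x i)) := by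
        refine Finset.sum_congr rfl ?_
        intro x _
        rw [hsplit x]; ring
      rw [e1, hcard]
      refine Finset.sum_congr rfl ?_
      intro x _
      rw [hHrec x]; ring
    have hΦ' : ∀ x y : Fin (T + 1) → S,
        (∀ j : Fin (T + 1), t ≤ j.val → x j = y j) → Φ x = Φ y := by
      intro x y h
      exact hΦ x y (fun j hj => h j (by omega))
    rw [step, ih (by omega) Φ hΦ', pow_succ]
    ring

/-- With `Z = ∑ x, μ_T(x)·h_T(x)`, the time-`t` marginal of the reward-tilted path
measure `p̃(x_{T:0}) = p(x_{T:0})·exp(τ·f(x_0))/Z` equals the time-`t` marginal of the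
base path measure tilted by `h_t`: `p̃_t(s) = p_t(s)·h_t(s)/Z` for every `s ∈ S`. -/
theorem tilted_marginal_eq {S : Type*} [Fintype S] [Nonempty S] [DecidableEq S]
    (T : ℕ) (hT : 1 ≤ T) (K : ℕ → S → S → ℝ)
    (hK : ∀ t, 1 ≤ t → t ≤ T → ∀ s : S, (∀ y, 0 ≤ K t s y) ∧ ∑ y, K t s y = 1)
    (μT : S → ℝ) (hμ0 : ∀ x, 0 ≤ μT x) (hμ1 : ∑ x, μT x = 1)
    (f : S → ℝ) (τ : ℝ) (hτ : 0 < τ)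
    (Z : ℝ) (hZ : Z = ∑ x, μT x * hback K f τ T x)
    (t : ℕ) (ht : t ≤ T) (s : S) :
    (∑ x : Fin (T + 1) → S,
        if x ((t : ℕ) : Fin (T + 1)) = s then
          pathP T μT K x * Real.exp (τ * f (x ((0 : ℕ) : Fin (T + 1)))) / Z
        else 0) =
      (∑ x : Fin (T + 1) → S,
        if x ((t : ℕ) : Fin (T + 1)) = s then pathP T μT K x else 0) *
        hback K f τ t s / Z := by
  set i : Fin (T + 1) := ((t : ℕ) : Fin (T + 1)) with hidef
  set Φ : (Fin (T + 1) → S) → ℝ := fun x => if x i = s then (1 : ℝ) else 0 with hΦdef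
  have htT1 : t < T + 1 := by omega
  have hival : i.val = t := Fin.val_cast_of_lt htT1
  have hΦdep : ∀ x y : Fin (T + 1) → S,
      (∀ j : Fin (T + 1), t ≤ j.val → x j = y j) → Φ x = Φ y := by
    intro x y h
    simp only [hΦdef]
    rw [h i (by omega)]
  set M : ℝ := ∑ x : Fin (T + 1) → S, if x i = s then pathP T μT K x else 0 with hM
  set N : ℝ := ∑ x : Fin (T + 1) → S,
      if x i = s then pathP T μT K x * Real.exp (τ * f (x ((0 : ℕ) : Fin (T + 1)))) else 0
    with hN
  set U : ℝ := ∑ x : Fin (T + 1) → S, if x i = s then pUpper T μT K t x else 0 with hU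
  set c : ℝ := (Fintype.card S : ℝ) ^ t with hc
  have hc0 : c ≠ 0 := pow_ne_zero _ (Nat.cast_ne_zero.mpr Fintype.card_ne_zero)
  -- apply lower_sum with g = exp
  have h1 := lower_sum T μT K (fun z => Real.exp (τ * f z)) t ht Φ hΦdep
  have h2 := lower_sum T μT K (fun _ => (1 : ℝ)) t ht Φ hΦdep
  have e1 : ∑ x : Fin (T + 1) → S,
      pUpper T μT K t x * Hgen K (fun z => Real.exp (τ * f z)) t (x i) * Φ x
      = Hgen K (fun z => Real.exp (τ * f z)) t s * U := by
    rw [hU, Finset.mul_sum]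
    refine Finset.sum_congr rfl ?_
    intro x _
    simp only [hΦdef]
    split_ifs with h
    · rw [h]; ring
    · ring
  have e2 : ∑ x : Fin (T + 1) → S,
      pathP T μT K x * Real.exp (τ * f (x ((0 : ℕ) : Fin (T + 1)))) * Φ x = N := by
    rw [hN]
    refine Finset.sum_congr rfl ?_
    intro x _
    simp only [hΦdef]
    split_ifs <;> ring
  have e3 : ∑ x : Fin (T + 1) → S,
      pUpper T μT K t x * Hgen K (fun _ => (1 : ℝ)) t (x i) * Φ x = U := by
    rw [hU]
    refine Finset.sum_congr rfl ?_
    intro x _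
    rw [Hgen_one T K hK t ht]
    simp only [hΦdef]
    split_ifs <;> ring
  have e4 : ∑ x : Fin (T + 1) → S, pathP T μT K x * (1 : ℝ) * Φ x = M := by
    rw [hM]
    refine Finset.sum_congr rfl ?_
    intro x _
    simp only [hΦdef]
    split_ifs <;> ring
  rw [e1, e2] at h1
  rw [e3, e4] at h2
  -- conclude N = M * h_t(s)
  have hkey : N = M * hback K f τ t s := by
    have : c * N = c * (M * hback K f τ t s) := by
      rw [← h1, h2, hback_eq_Hgen]; ring
    exact mul_left_cancel₀ hc0 this
  have lhs_eq : (∑ x : Fin (T + 1) → S,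
      if x i = s then
        pathP T μT K x * Real.exp (τ * f (x ((0 : ℕ) : Fin (T + 1)))) / Z
      else 0) = N / Z := by
    rw [hN, Finset.sum_div]
    refine Finset.sum_congr rfl ?_
    intro x _
    split_ifs <;> simp
  rw [lhs_eq, hkey]
end

section
/- There exists a finitely supported probability distribution ν on integer vectors n : Fin m → ℕ such that (i) every n in the support of ν satisfies ∑_i n_i = N and n_i ∈ {⌊ξ_i⌋, ⌈ξ_i⌉} for every i, and (ii) the expectation matches the target allocation: ∑_n ν(n)·n_i = ξ_i for every i. That is, any nonnegative real offspring allocation summing to an integer N admits a low-variance dependent rounding into integer offspring counts that sum exactly to N, preserve expectations, and deviate from the targets by less than 1 in each coordinate. -/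
private lemma ssp_interval {ξ x : ℝ} (h1 : (⌊ξ⌋₊ : ℝ) ≤ x) (h2 : x ≤ (⌈ξ⌉₊ : ℝ)) :
    (⌊x⌋₊ = ⌊ξ⌋₊ ∨ ⌊x⌋₊ = ⌈ξ⌉₊) ∧ (⌈x⌉₊ = ⌊ξ⌋₊ ∨ ⌈x⌉₊ = ⌈ξ⌉₊) := by
  have ha : ⌊ξ⌋₊ ≤ ⌊x⌋₊ := by have := Nat.floor_le_floor (R := ℝ) h1; simpa using this
  have hb : ⌊x⌋₊ ≤ ⌈ξ⌉₊ := by have := Nat.floor_le_floor (R := ℝ) h2; simpa using this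
  have hc : ⌊ξ⌋₊ ≤ ⌈x⌉₊ := by have := Nat.ceil_le_ceil (R := ℝ) h1; simpa using this
  have hd : ⌈x⌉₊ ≤ ⌈ξ⌉₊ := by have := Nat.ceil_le_ceil (R := ℝ) h2; simpa using this
  have he : ⌈ξ⌉₊ ≤ ⌊ξ⌋₊ + 1 := Nat.ceil_le_floor_add_one ξ
  omega

private lemma ssp_sum_ext {m : ℕ} (ν : (Fin m → ℕ) →₀ ℝ) (s : Finset (Fin m → ℕ))
    (hs : ν.support ⊆ s) (g : (Fin m → ℕ) → ℝ) :
    ∑ n ∈ s, ν n * g n = ∑ n ∈ ν.support, ν n * g n := by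
  refine (Finset.sum_subset hs fun n _ hn => ?_).symm
  rw [Finsupp.notMem_support_iff.mp hn, zero_mul]

/-- Good distribution predicate. -/
private def SspGood (m N : ℕ) (ξ : Fin m → ℝ) (ν : (Fin m → ℕ) →₀ ℝ) : Prop :=
  (∀ n, 0 ≤ ν n) ∧
  (∑ n ∈ ν.support, ν n) = 1 ∧
  (∀ n ∈ ν.support, (∑ i, n i) = N) ∧
  (∀ n ∈ ν.support, ∀ i, n i = ⌊ξ i⌋₊ ∨ n i = ⌈ξ i⌉₊) ∧
  (∀ i, (∑ n ∈ ν.support, ν n * (n i : ℝ)) = ξ i)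

/-- Mixing two good distributions. -/
private lemma ssp_combine {m N : ℕ} {ξ ξA ξB : Fin m → ℝ} {p : ℝ}
    (hp0 : 0 ≤ p) (hp1 : p ≤ 1)
    (hA : ∀ k, (⌊ξ k⌋₊ : ℝ) ≤ ξA k ∧ ξA k ≤ (⌈ξ k⌉₊ : ℝ))
    (hB : ∀ k, (⌊ξ k⌋₊ : ℝ) ≤ ξB k ∧ ξB k ≤ (⌈ξ k⌉₊ : ℝ))
    (hmix : ∀ k, p * ξA k + (1 - p) * ξB k = ξ k)
    {νA νB : (Fin m → ℕ) →₀ ℝ}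
    (hGA : SspGood m N ξA νA) (hGB : SspGood m N ξB νB) :
    ∃ ν, SspGood m N ξ ν := by
  obtain ⟨hA0, hA1, hAN, hAm, hAe⟩ := hGA
  obtain ⟨hB0, hB1, hBN, hBm, hBe⟩ := hGB
  set ν : (Fin m → ℕ) →₀ ℝ := p • νA + (1 - p) • νB with hν
  set s : Finset (Fin m → ℕ) := νA.support ∪ νB.support with hs
  have hsub : ν.support ⊆ s :=
    Finsupp.support_add.trans
      (Finset.union_subset_union Finsupp.support_smul Finsupp.support_smul)
  have heval : ∀ n, ν n = p * νA n + (1 - p) * νB n := by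
    intro n; simp [hν]
  refine ⟨ν, ?_, ?_, ?_, ?_, ?_⟩
  · intro n
    rw [heval n]
    have := hA0 n; have := hB0 n; nlinarith
  · have e1 : ∑ n ∈ ν.support, ν n = ∑ n ∈ s, ν n :=
      (Finset.sum_subset hsub fun n _ hn => Finsupp.notMem_support_iff.mp hn)
    have e2 : ∑ n ∈ s, νA n = 1 := by
      rw [Finset.sum_subset (Finset.subset_union_left)
        (fun n _ hn => Finsupp.notMem_support_iff.mp hn)] at hA1
      exact hA1
    have e3 : ∑ n ∈ s, νB n = 1 := by
      rw [Finset.sum_subset (Finset.subset_union_right)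
        (fun n _ hn => Finsupp.notMem_support_iff.mp hn)] at hB1
      exact hB1
    rw [e1]
    calc ∑ n ∈ s, ν n = ∑ n ∈ s, (p * νA n + (1 - p) * νB n) :=
          Finset.sum_congr rfl fun n _ => heval n
      _ = p * ∑ n ∈ s, νA n + (1 - p) * ∑ n ∈ s, νB n := by
          rw [Finset.sum_add_distrib, Finset.mul_sum, Finset.mul_sum]
      _ = 1 := by rw [e2, e3]; ring
  · intro n hn
    rcases Finset.mem_union.mp (hsub hn) with h | h
    · exact hAN n h
    · exact hBN n h
  · intro n hn i
    rcases Finset.mem_union.mp (hsub hn) with h | h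
    · rcases hAm n h i with h' | h'
      · rw [h']; exact (ssp_interval (hA i).1 (hA i).2).1
      · rw [h']; exact (ssp_interval (hA i).1 (hA i).2).2
    · rcases hBm n h i with h' | h'
      · rw [h']; exact (ssp_interval (hB i).1 (hB i).2).1
      · rw [h']; exact (ssp_interval (hB i).1 (hB i).2).2
  · intro i
    have e1 : ∑ n ∈ ν.support, ν n * (n i : ℝ) = ∑ n ∈ s, ν n * (n i : ℝ) :=
      (ssp_sum_ext ν s hsub _).symm
    rw [e1]
    have e2 : ∑ n ∈ s, νA n * (n i : ℝ) = ξA i := by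
      rw [ssp_sum_ext νA s Finset.subset_union_left]; exact hAe i
    have e3 : ∑ n ∈ s, νB n * (n i : ℝ) = ξB i := by
      rw [ssp_sum_ext νB s Finset.subset_union_right]; exact hBe i
    calc ∑ n ∈ s, ν n * (n i : ℝ)
        = ∑ n ∈ s, (p * (νA n * (n i : ℝ)) + (1 - p) * (νB n * (n i : ℝ))) :=
          Finset.sum_congr rfl fun n _ => by rw [heval n]; ring
      _ = p * ∑ n ∈ s, νA n * (n i : ℝ) + (1 - p) * ∑ n ∈ s, νB n * (n i : ℝ) := by
          rw [Finset.sum_add_distrib, Finset.mul_sum, Finset.mul_sum]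
      _ = ξ i := by rw [e2, e3, hmix i]

private lemma ssp_frac {x : ℝ} (hx : 0 ≤ x) (h : ⌊x⌋₊ ≠ ⌈x⌉₊) :
    (⌊x⌋₊ : ℝ) < x ∧ x < (⌈x⌉₊ : ℝ) := by
  refine ⟨(Nat.floor_le hx).lt_of_ne fun he => h ?_, (Nat.le_ceil x).lt_of_ne fun he => h ?_⟩
  · simpa using congrArg Nat.ceil he
  · simpa using congrArg Nat.floor he

private lemma ssp_dirac {m : ℕ} (N : ℕ) (ξ : Fin m → ℝ) (hξ : ∀ i, 0 ≤ ξ i)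
    (hsum : ∑ i, ξ i = (N : ℝ)) (hall : ∀ i, ⌊ξ i⌋₊ = ⌈ξ i⌉₊) :
    ∃ ν, SspGood m N ξ ν := by
  have hint : ∀ i, (⌊ξ i⌋₊ : ℝ) = ξ i := by
    intro i
    refine le_antisymm (Nat.floor_le (hξ i)) ?_
    have := Nat.le_ceil (ξ i)
    rw [← hall i] at this
    exact this
  set n0 : Fin m → ℕ := fun i => ⌊ξ i⌋₊ with hn0
  refine ⟨Finsupp.single n0 1, ?_, ?_, ?_, ?_, ?_⟩
  · intro n
    rcases eq_or_ne n0 n with h | h <;> simp [Finsupp.single_apply, h]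
  · rw [Finsupp.support_single_ne_zero n0 one_ne_zero]
    simp
  · intro n hn
    rw [Finsupp.support_single_ne_zero n0 one_ne_zero, Finset.mem_singleton] at hn
    subst hn
    have hc : ((∑ i, n0 i : ℕ) : ℝ) = ((N : ℕ) : ℝ) := by
      push_cast
      rw [Finset.sum_congr rfl fun i _ => hint i, hsum]
    exact_mod_cast hc
  · intro n hn i
    rw [Finsupp.support_single_ne_zero n0 one_ne_zero, Finset.mem_singleton] at hn
    subst hn
    exact Or.inl rfl
  · intro i
    rw [Finsupp.support_single_ne_zero n0 one_ne_zero]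
    simp [hn0, hint i]

private lemma ssp_sum_shift {m : ℕ} (ξ : Fin m → ℝ) {i j : Fin m} (hij : i ≠ j) (t : ℝ) :
    ∑ k, (if k = i then ξ i + t else if k = j then ξ j - t else ξ k) = ∑ k, ξ k := by
  have key : ∀ k, (if k = i then ξ i + t else if k = j then ξ j - t else ξ k)
      = ξ k + (if k = i then t else 0) - (if k = j then t else 0) := by
    intro k
    by_cases h1 : k = i
    · subst h1; rw [if_pos rfl, if_pos rfl, if_neg hij]; ring
    · rw [if_neg h1, if_neg h1]
      by_cases h2 : k = j
      · subst h2; rw [if_pos rfl, if_pos rfl]; ring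
      · rw [if_neg h2, if_neg h2]; ring
  rw [Finset.sum_congr rfl fun k _ => key k]
  rw [Finset.sum_sub_distrib, Finset.sum_add_distrib]
  simp [Finset.sum_ite_eq']

private lemma ssp_aux (m N : ℕ) :
    ∀ k (ξ : Fin m → ℝ), (∀ i, 0 ≤ ξ i) → (∑ i, ξ i = (N : ℝ)) →
      ((Finset.univ.filter fun i => ⌊ξ i⌋₊ ≠ ⌈ξ i⌉₊).card ≤ k) →
      ∃ ν, SspGood m N ξ ν := by
  intro k
  induction k with
  | zero =>
    intro ξ hξ hsum hcard
    refine ssp_dirac N ξ hξ hsum fun i => ?_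
    by_contra h
    have : i ∈ Finset.univ.filter fun i => ⌊ξ i⌋₊ ≠ ⌈ξ i⌉₊ := by simp [h]
    have := Finset.card_pos.mpr ⟨i, this⟩
    omega
  | succ k ih =>
    intro ξ hξ hsum hcard
    by_cases hall : ∀ i, ⌊ξ i⌋₊ = ⌈ξ i⌉₊
    · exact ssp_dirac N ξ hξ hsum hall
    push_neg at hall
    obtain ⟨i, hi⟩ := hall
    -- there is a second fractional coordinate
    have hj : ∃ j, j ≠ i ∧ ⌊ξ j⌋₊ ≠ ⌈ξ j⌉₊ := by
      by_contra h
      push_neg at h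
      have hint : ∀ j, j ≠ i → (⌊ξ j⌋₊ : ℝ) = ξ j := by
        intro j hji
        refine le_antisymm (Nat.floor_le (hξ j)) ?_
        have := Nat.le_ceil (ξ j)
        rw [← h j hji] at this
        exact this
      set S : ℕ := ∑ j ∈ Finset.univ.erase i, ⌊ξ j⌋₊ with hS
      have h1 : ξ i + (S : ℝ) = (N : ℝ) := by
        rw [← hsum, ← Finset.add_sum_erase _ _ (Finset.mem_univ i)]
        congr 1
        rw [hS]
        push_cast
        refine Finset.sum_congr rfl fun j hj => ?_
        exact hint j (Finset.ne_of_mem_erase hj)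
      have hSN : S ≤ N := by
        have := hξ i
        have : (S : ℝ) ≤ (N : ℝ) := by linarith
        exact_mod_cast this
      have hxi : ξ i = ((N - S : ℕ) : ℝ) := by
        rw [Nat.cast_sub hSN]; linarith
      apply hi
      rw [hxi, Nat.floor_natCast, Nat.ceil_natCast]
    obtain ⟨j, hji, hjf⟩ := hj
    have hij : i ≠ j := hji.symm
    obtain ⟨hfi, hci⟩ := ssp_frac (hξ i) hi
    obtain ⟨hfj, hcj⟩ := ssp_frac (hξ j) hjf
    set a : ℝ := ξ i - (⌊ξ i⌋₊ : ℝ) with ha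
    set b : ℝ := (⌈ξ i⌉₊ : ℝ) - ξ i with hb
    set c : ℝ := ξ j - (⌊ξ j⌋₊ : ℝ) with hc
    set d : ℝ := (⌈ξ j⌉₊ : ℝ) - ξ j with hd
    have ha0 : 0 < a := by simp [ha]; linarith
    have hb0 : 0 < b := by simp [hb]; linarith
    have hc0 : 0 < c := by simp [hc]; linarith
    have hd0 : 0 < d := by simp [hd]; linarith
    set t : ℝ := min b c with ht
    set t' : ℝ := min a d with ht'
    have ht0 : 0 < t := lt_min hb0 hc0
    have ht'0 : 0 < t' := lt_min ha0 hd0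
    have htt : 0 < t + t' := by linarith
    set p : ℝ := t' / (t + t') with hp
    have hp0 : 0 ≤ p := le_of_lt (div_pos ht'0 htt)
    have hp1 : p ≤ 1 := by
      rw [hp, div_le_one htt]; linarith
    have hptt : p * (t + t') = t' := div_mul_cancel₀ t' (ne_of_gt htt)
    set ξA : Fin m → ℝ := fun kk => if kk = i then ξ i + t else if kk = j then ξ j - t else ξ kk with hξA
    set ξB : Fin m → ℝ := fun kk => if kk = j then ξ j + t' else if kk = i then ξ i - t' else ξ kk with hξB
    have hAi : ξA i = ξ i + t := by
      simp only [hξA, if_pos rfl, if_true, eq_self_iff_true]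
    have hAj : ξA j = ξ j - t := by
      simp only [hξA, if_neg hji, if_pos rfl, if_true, eq_self_iff_true]
    have hAo : ∀ kk, kk ≠ i → kk ≠ j → ξA kk = ξ kk := by
      intro kk h1 h2; simp only [hξA, if_neg h1, if_neg h2]
    have hBj : ξB j = ξ j + t' := by
      simp only [hξB, if_pos rfl, if_true, eq_self_iff_true]
    have hBi : ξB i = ξ i - t' := by
      simp only [hξB, if_neg hij, if_pos rfl, if_true, eq_self_iff_true]
    have hBo : ∀ kk, kk ≠ i → kk ≠ j → ξB kk = ξ kk := by
      intro kk h1 h2; simp only [hξB, if_neg h2, if_neg h1]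
    have htb : t ≤ b := min_le_left _ _
    have htc : t ≤ c := min_le_right _ _
    have hta : t' ≤ a := min_le_left _ _
    have htd : t' ≤ d := min_le_right _ _
    -- bounds
    have bndA : ∀ kk, (⌊ξ kk⌋₊ : ℝ) ≤ ξA kk ∧ ξA kk ≤ (⌈ξ kk⌉₊ : ℝ) := by
      intro kk
      by_cases h1 : kk = i
      · subst h1
        rw [hAi]
        constructor <;> linarith
      by_cases h2 : kk = j
      · subst h2
        rw [hAj]
        constructor <;> linarith
      · rw [hAo kk h1 h2]
        exact ⟨Nat.floor_le (hξ kk), Nat.le_ceil _⟩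
    have bndB : ∀ kk, (⌊ξ kk⌋₊ : ℝ) ≤ ξB kk ∧ ξB kk ≤ (⌈ξ kk⌉₊ : ℝ) := by
      intro kk
      by_cases h1 : kk = i
      · subst h1
        rw [hBi]
        constructor <;> linarith
      by_cases h2 : kk = j
      · subst h2
        rw [hBj]
        constructor <;> linarith
      · rw [hBo kk h1 h2]
        exact ⟨Nat.floor_le (hξ kk), Nat.le_ceil _⟩
    have hξA0 : ∀ kk, 0 ≤ ξA kk := fun kk =>
      le_trans (by positivity) (bndA kk).1
    have hξB0 : ∀ kk, 0 ≤ ξB kk := fun kk =>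
      le_trans (by positivity) (bndB kk).1
    have hsumA : ∑ kk, ξA kk = (N : ℝ) := by
      rw [hξA]; rw [ssp_sum_shift ξ hij t]; exact hsum
    have hsumB : ∑ kk, ξB kk = (N : ℝ) := by
      rw [hξB]; rw [ssp_sum_shift ξ hji t']; exact hsum
    -- fractional count decreases
    have hsubA : (Finset.univ.filter fun kk => ⌊ξA kk⌋₊ ≠ ⌈ξA kk⌉₊)
        ⊆ (Finset.univ.filter fun kk => ⌊ξ kk⌋₊ ≠ ⌈ξ kk⌉₊) := by
      intro kk hk
      simp only [Finset.mem_filter, Finset.mem_univ, true_and] at hk ⊢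
      contrapose! hk
      obtain ⟨hf, hcl⟩ := ssp_interval (bndA kk).1 (bndA kk).2
      omega
    have hsubB : (Finset.univ.filter fun kk => ⌊ξB kk⌋₊ ≠ ⌈ξB kk⌉₊)
        ⊆ (Finset.univ.filter fun kk => ⌊ξ kk⌋₊ ≠ ⌈ξ kk⌉₊) := by
      intro kk hk
      simp only [Finset.mem_filter, Finset.mem_univ, true_and] at hk ⊢
      contrapose! hk
      obtain ⟨hf, hcl⟩ := ssp_interval (bndB kk).1 (bndB kk).2
      omega
    have hwitA : ∃ w ∈ Finset.univ.filter fun kk => ⌊ξ kk⌋₊ ≠ ⌈ξ kk⌉₊,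
        w ∉ (Finset.univ.filter fun kk => ⌊ξA kk⌋₊ ≠ ⌈ξA kk⌉₊) := by
      rcases min_cases b c with ⟨hmin, _⟩ | ⟨hmin, _⟩
      · refine ⟨i, by simp [hi], ?_⟩
        have hv : ξA i = ((⌈ξ i⌉₊ : ℕ) : ℝ) := by
          rw [hAi, ht, hmin, hb]; ring
        simp [hv, Nat.floor_natCast, Nat.ceil_natCast]
      · refine ⟨j, by simp [hjf], ?_⟩
        have hv : ξA j = ((⌊ξ j⌋₊ : ℕ) : ℝ) := by
          rw [hAj, ht, hmin, hc]; ring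
        simp [hv, Nat.floor_natCast, Nat.ceil_natCast]
    have hwitB : ∃ w ∈ Finset.univ.filter fun kk => ⌊ξ kk⌋₊ ≠ ⌈ξ kk⌉₊,
        w ∉ (Finset.univ.filter fun kk => ⌊ξB kk⌋₊ ≠ ⌈ξB kk⌉₊) := by
      rcases min_cases a d with ⟨hmin, _⟩ | ⟨hmin, _⟩
      · refine ⟨i, by simp [hi], ?_⟩
        have hv : ξB i = ((⌊ξ i⌋₊ : ℕ) : ℝ) := by
          rw [hBi, ht', hmin, ha]; ring
        simp [hv, Nat.floor_natCast, Nat.ceil_natCast]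
      · refine ⟨j, by simp [hjf], ?_⟩
        have hv : ξB j = ((⌈ξ j⌉₊ : ℕ) : ℝ) := by
          rw [hBj, ht', hmin, hd]; ring
        simp [hv, Nat.floor_natCast, Nat.ceil_natCast]
    have hcardA : (Finset.univ.filter fun kk => ⌊ξA kk⌋₊ ≠ ⌈ξA kk⌉₊).card ≤ k := by
      have := Finset.card_lt_card ((Finset.ssubset_iff_of_subset hsubA).mpr hwitA)
      omega
    have hcardB : (Finset.univ.filter fun kk => ⌊ξB kk⌋₊ ≠ ⌈ξB kk⌉₊).card ≤ k := by
      have := Finset.card_lt_card ((Finset.ssubset_iff_of_subset hsubB).mpr hwitB)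
      omega
    obtain ⟨νA, hGA⟩ := ih ξA hξA0 hsumA hcardA
    obtain ⟨νB, hGB⟩ := ih ξB hξB0 hsumB hcardB
    refine ssp_combine hp0 hp1 bndA bndB ?_ hGA hGB
    intro kk
    by_cases h1 : kk = i
    · subst h1
      rw [hAi, hBi]
      linear_combination hptt
    by_cases h2 : kk = j
    · subst h2
      rw [hAj, hBj]
      linear_combination -hptt
    · rw [hAo kk h1 h2, hBo kk h1 h2]
      ring


/-- Srinivasan Sampling Process (SSP) resampling guarantee: any nonnegative real
offspring allocation `ξ : Fin m → ℝ` summing to an integer `N` admits a low-variance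
dependent rounding, i.e. a finitely supported probability distribution `ν` on integer
vectors `n : Fin m → ℕ` such that every `n` in the support of `ν` sums to `N` with
`n i ∈ {⌊ξ i⌋, ⌈ξ i⌉}` for every `i`, and the expectation matches the target
allocation: `∑ n, ν n · n i = ξ i` for every `i`. -/
theorem ssp_dependent_rounding (m N : ℕ) (hm : 1 ≤ m)
    (ξ : Fin m → ℝ) (hξ : ∀ i, 0 ≤ ξ i) (hsum : ∑ i, ξ i = (N : ℝ)) :
    ∃ ν : (Fin m → ℕ) →₀ ℝ,
      (∀ n, 0 ≤ ν n) ∧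
      (∑ n ∈ ν.support, ν n) = 1 ∧
      (∀ n ∈ ν.support, (∑ i, n i) = N) ∧
      (∀ n ∈ ν.support, ∀ i, n i = ⌊ξ i⌋₊ ∨ n i = ⌈ξ i⌉₊) ∧
      (∀ i, (∑ n ∈ ν.support, ν n * (n i : ℝ)) = ξ i) := by
  obtain ⟨ν, h⟩ := ssp_aux m N (Finset.univ.filter fun i => ⌊ξ i⌋₊ ≠ ⌈ξ i⌉₊).card ξ hξ hsum le_rfl
  exact ⟨ν, h⟩
end
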